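/- Let ‖·‖ be a compatible unitarily invariant norm with associated symmetric gauge function ψ. If {V_i}_{i=1}^m is a uniformly weighted projective rank-l (m,l,d)-protocol with max_{i≠j} tr(|V_i V_j*|) ≥ l·c_{m,l,d} (i.e. {V_i} ∈ C(m,l,d)), then the worst-case reconstruction error for two lost packets satisfies e_2^ψ(V) ≥ ψ( ((d/(ml)) + c_{m,l,d})·e_l , ((d/(ml)) − c_{m,l,d})·e_l ), the gauge function being evaluated at the vector in ℝ^{2l} whose first l entries equal d/(ml) + c_{m,l,d} and last l entries equal d/(ml) − c_{m,l,d}. -/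

import Mathlib

open Matrix BigOperators
open scoped ComplexOrder

noncomputable section

variable {𝕜 : Type*} [RCLike 𝕜]

/-- Sum of the `k` largest entries of a vector `x : Fin n → ℝ`,
as the supremum of the sums over subsets of cardinality `k`. -/
noncomputable def kMaxSum {n : ℕ} (x : Fin n → ℝ) (k : ℕ) : ℝ :=
  sSup ((fun t : Finset (Fin n) => ∑ i ∈ t, x i) '' {t : Finset (Fin n) | t.card = k})

/-- `x ≺_w y` : submajorization of real vectors. -/
def SubMajVec {n : ℕ} (x y : Fin n → ℝ) : Prop :=
  ∀ k : ℕ, k ≤ n → kMaxSum x k ≤ kMaxSum y k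

/-- `A ≺_w B` : submajorization of self-adjoint matrices (via eigenvalues). -/
def SubMajMat {n : ℕ} (A B : Matrix (Fin n) (Fin n) 𝕜) : Prop :=
  ∃ (hA : A.IsHermitian) (hB : B.IsHermitian), SubMajVec hA.eigenvalues hB.eigenvalues

/-- `A ≺ B` : majorization of self-adjoint matrices. -/
def MajMat {n : ℕ} (A B : Matrix (Fin n) (Fin n) 𝕜) : Prop :=
  SubMajMat A B ∧ A.trace = B.trace

/-- The q-potential `P_q(V) = Σ_{i,j} |V_i V_j*|²` of a reconstruction system. -/
noncomputable def qPotential {m l d : ℕ} (V : Fin m → Matrix (Fin l) (Fin d) 𝕜) :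
    Matrix (Fin l) (Fin l) 𝕜 :=
  ∑ i, ∑ j, (V i * (V j)ᴴ)ᴴ * (V i * (V j)ᴴ)

/-- `tr |A|² = tr(AᴴA)`, as a real number. -/
noncomputable def traceAbsSq {a b : ℕ} (A : Matrix (Fin a) (Fin b) 𝕜) : ℝ :=
  RCLike.re (Aᴴ * A).trace

/-- `tr |A| = tr((AᴴA)^{1/2})`, the sum of the singular values of `A`. -/
noncomputable def traceAbs {a b : ℕ} (A : Matrix (Fin a) (Fin b) 𝕜) : ℝ :=
  ∑ j, Real.sqrt ((Matrix.posSemidef_conjTranspose_mul_self A).1.eigenvalues j)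

/-- A unitarily invariant norm on `M_n(𝕜)`. -/
structure UINorm (n : ℕ) (𝕜 : Type*) [RCLike 𝕜] where
  N : Matrix (Fin n) (Fin n) 𝕜 → ℝ
  nonneg : ∀ A, 0 ≤ N A
  eq_zero : ∀ A, N A = 0 → A = 0
  triangle : ∀ A B, N (A + B) ≤ N A + N B
  smul_eq : ∀ (c : 𝕜) (A), N (c • A) = ‖c‖ * N A
  invariant : ∀ (A : Matrix (Fin n) (Fin n) 𝕜) (U W : Matrix.unitaryGroup (Fin n) 𝕜),
    N ((U : Matrix (Fin n) (Fin n) 𝕜) * A * (W : Matrix (Fin n) (Fin n) 𝕜)) = N A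

/-- `X ⊕ 0_t` : padding a square matrix with `t` zero rows and columns. -/
noncomputable def padMat {r : ℕ} (t : ℕ) (X : Matrix (Fin r) (Fin r) 𝕜) :
    Matrix (Fin (r + t)) (Fin (r + t)) 𝕜 :=
  Matrix.reindex finSumFinEquiv finSumFinEquiv (Matrix.fromBlocks X 0 0 0)

/-- A compatible unitarily invariant norm: a family of unitarily invariant norms,
one in each dimension, unchanged by adjoining zero rows and columns. -/
structure CUIN (𝕜 : Type*) [RCLike 𝕜] where
  N : ∀ n : ℕ, Matrix (Fin n) (Fin n) 𝕜 → ℝ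
  nonneg : ∀ n A, 0 ≤ N n A
  eq_zero : ∀ n A, N n A = 0 → A = 0
  triangle : ∀ n A B, N n (A + B) ≤ N n A + N n B
  smul_eq : ∀ n (c : 𝕜) (A), N n (c • A) = ‖c‖ * N n A
  invariant : ∀ n (A : Matrix (Fin n) (Fin n) 𝕜) (U W : Matrix.unitaryGroup (Fin n) 𝕜),
    N n ((U : Matrix (Fin n) (Fin n) 𝕜) * A * (W : Matrix (Fin n) (Fin n) 𝕜)) = N n A
  compatible : ∀ (r t : ℕ) (X : Matrix (Fin r) (Fin r) 𝕜), N (r + t) (padMat t X) = N r X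

namespace CUIN

/-- The associated symmetric gauge function, evaluated on a real vector:
`ψ(x) = ‖diag(x)‖`. -/
noncomputable def psi (Φ : CUIN 𝕜) {n : ℕ} (x : Fin n → ℝ) : ℝ :=
  Φ.N n (Matrix.diagonal fun i => (x i : 𝕜))

/-- `η_ψ(l) = ψ(e_l)/l = ‖I_l‖/l`. -/
noncomputable def eta (Φ : CUIN 𝕜) (l : ℕ) : ℝ := Φ.N l 1 / l

/-- A compatible u.i.n. is strict if `‖A‖ = tr(A)·η_ψ(l)` for positive semidefinite `A`
forces `A = (tr A / l)·I`. -/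
def Strict (Φ : CUIN 𝕜) : Prop :=
  ∀ (l : ℕ) (A : Matrix (Fin l) (Fin l) 𝕜), A.PosSemidef →
    Φ.N l A = RCLike.re A.trace * Φ.eta l → A = (A.trace / (l : 𝕜)) • 1

/-- A 2-strongly strict compatible u.i.n.: strict, and on `M_2` any two self-adjoint
matrices `A ≺ B` with equal norms are unitarily equivalent. -/
def TwoStronglyStrict (Φ : CUIN 𝕜) : Prop :=
  Φ.Strict ∧ ∀ A B : Matrix (Fin 2) (Fin 2) 𝕜, A.IsHermitian → B.IsHermitian →
    MajMat A B → Φ.N 2 A = Φ.N 2 B →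
    ∃ U ∈ Matrix.unitaryGroup (Fin 2) 𝕜, A = star U * B * U

end CUIN

/-- Worst-case reconstruction error for `p` lost packets:
`e_p^ψ(V) = max_{|K| = p} ‖V*V − V*E_K V‖ = max_{|K| = p} ‖Σ_{i ∈ K} Vᵢ*Vᵢ‖`. -/
noncomputable def errP {m l d : ℕ} (Φ : CUIN 𝕜) (p : ℕ)
    (V : Fin m → Matrix (Fin l) (Fin d) 𝕜) : ℝ :=
  sSup {r : ℝ | ∃ K : Finset (Fin m), K.card = p ∧ r = Φ.N d (∑ i ∈ K, (V i)ᴴ * V i)}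

/-- The constant `c_{m,l,d} = √( (d/((m−1)·m·l))·(1 − d/(ml)) )`. -/
noncomputable def cmld (m l d : ℕ) : ℝ :=
  Real.sqrt ((d : ℝ) / (((m : ℝ) - 1) * m * l) * (1 - (d : ℝ) / ((m : ℝ) * l)))

/-- A uniformly weighted projective rank-`l` `(m,l,d)`-protocol:
`Σᵢ Vᵢ*Vᵢ = I_d` and `VᵢVᵢ* = (d/(ml))·I_l` for every `i`. -/
def IsUWP {m l d : ℕ} (V : Fin m → Matrix (Fin l) (Fin d) 𝕜) : Prop :=
  (∑ i, (V i)ᴴ * V i = 1) ∧ ∀ i, V i * (V i)ᴴ = ((d : 𝕜) / ((m : 𝕜) * (l : 𝕜))) • 1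

/-- A uniformly weighted projective rank-`l` `(m,l,d)`-protocol, stated via projections:
`Σᵢ Vᵢ*Vᵢ = I_d` and `Vᵢ*Vᵢ = (d/(ml))·Pᵢ` with `Pᵢ` rank-`l` orthogonal projections. -/
def IsUWPProj {m l d : ℕ} (V : Fin m → Matrix (Fin l) (Fin d) 𝕜) : Prop :=
  (∑ i, (V i)ᴴ * V i = 1) ∧ ∀ i, ∃ P : Matrix (Fin d) (Fin d) 𝕜,
    Pᴴ = P ∧ P * P = P ∧ P.rank = l ∧ (V i)ᴴ * V i = ((d : 𝕜) / ((m : 𝕜) * (l : 𝕜))) • P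

/-- Padding a vector with zeros to length `d`. -/
def padVec {l : ℕ} (d : ℕ) (x : Fin l → ℝ) : Fin d → ℝ :=
  fun j => if h : (j : ℕ) < l then x ⟨j, h⟩ else 0

end

/-!
Write `a = d/(ml)`, `M = VᵢVⱼ*` and `W` for `Vᵢ` stacked on `Vⱼ`. The loss of packets `i, j`
costs `‖Vᵢ*Vᵢ + Vⱼ*Vⱼ‖ = ‖W*W‖`, and `W*W` has the same nonzero spectrum as the Gram matrix
`WW* = a·I + [[0, M], [M*, 0]]`, so the two have the same norm by compatibility and unitary
invariance. The spectrum of the dilation `[[0, M], [M*, 0]]` is symmetric about `0` with absolute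
values summing to `2 tr|M|`; sorted, it is `(y, -y)` with `y ≥ 0` and `∑ y = tr|M|`. As `ψ` is
convex and permutation invariant, averaging over rotations of each half gives
`ψ(a + s, a - s) ≤ ψ(a + y, a - y)` with `s = tr|M|/l ≥ c`, and `t ↦ ψ(a + t, a - t)` is convex
and even, hence nondecreasing on `t ≥ 0`.
-/

open Polynomial

section Multisets

variable {α : Type*}

lemma Finset.map_univ_val_comp_perm {n : ℕ} (v : Fin n → α) (σ : Equiv.Perm (Fin n)) :
    Finset.univ.val.map (v ∘ σ) = Finset.univ.val.map v := by
  rw [← Multiset.map_map, Multiset.map_univ_val_equiv]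

lemma Fin.map_univ_val_append {m n : ℕ} (u : Fin m → α) (v : Fin n → α) :
    Finset.univ.val.map (Fin.append u v) = Finset.univ.val.map u + Finset.univ.val.map v := by
  simp [List.ofFn_fin_append]

lemma Finset.sum_comp_eq_of_map_univ_val_eq {ι κ β : Type*} [Fintype ι] [Fintype κ]
    [AddCommMonoid β] {v : ι → α} {w : κ → α} (h : Finset.univ.val.map v = Finset.univ.val.map w)
    (f : α → β) :
    ∑ i, f (v i) = ∑ k, f (w k) := by
  simpa [Multiset.map_map] using congrArg (fun s => (s.map f).sum) h

variable [LinearOrder α]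

lemma eq_of_monotone_of_map_univ_val_eq {n : ℕ} {v w : Fin n → α} (hv : Monotone v)
    (hw : Monotone w) (h : Finset.univ.val.map v = Finset.univ.val.map w) : v = w := by
  have hperm : (List.ofFn v).Perm (List.ofFn w) := by simpa using h
  exact List.ofFn_injective (hperm.eq_of_sortedLE hv.sortedLE_ofFn hw.sortedLE_ofFn)

lemma exists_perm_of_map_univ_val_eq {n : ℕ} {v w : Fin n → α}
    (h : Finset.univ.val.map v = Finset.univ.val.map w) :
    ∃ σ : Equiv.Perm (Fin n), v = w ∘ σ := by
  have hsort : v ∘ Tuple.sort v = w ∘ Tuple.sort w :=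
    eq_of_monotone_of_map_univ_val_eq (Tuple.monotone_sort v) (Tuple.monotone_sort w) (by
      rw [Finset.map_univ_val_comp_perm, Finset.map_univ_val_comp_perm, h])
  refine ⟨(Tuple.sort v).symm.trans (Tuple.sort w), funext fun k => ?_⟩
  simpa using congrFun hsort ((Tuple.sort v).symm k)

end Multisets

lemma exists_nonneg_map_univ_val_eq_append_neg {l : ℕ} (x : Fin (l + l) → ℝ)
    (hx : Finset.univ.val.map (-x) = Finset.univ.val.map x) :
    ∃ y : Fin l → ℝ, 0 ≤ y ∧ Finset.univ.val.map x = Finset.univ.val.map (Fin.append y (-y)) := by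
  set ν := x ∘ Tuple.sort x
  have hν : Monotone ν := Tuple.monotone_sort x
  have hνx : Finset.univ.val.map ν = Finset.univ.val.map x := Finset.map_univ_val_comp_perm _ _
  have hrev : ∀ k : Fin (l + l), ν k.rev = -ν k := by
    have hmono : Monotone ((-ν) ∘ Fin.revPerm) :=
      fun a b hab => neg_le_neg (hν (Fin.rev_le_rev.2 hab))
    have hsymm := eq_of_monotone_of_map_univ_val_eq hν hmono (by
      rw [Finset.map_univ_val_comp_perm (-ν), hνx, ← hx, ← Finset.map_univ_val_comp_perm (-x)]
      rfl)
    intro k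
    have := congrFun hsymm k.rev
    simp only [Function.comp_apply, Fin.revPerm_apply, Fin.rev_rev, Pi.neg_apply] at this
    linarith
  set y := ν ∘ Fin.natAdd l
  refine ⟨y, fun k => ?_, ?_⟩
  · have hle : (Fin.natAdd l k).rev ≤ Fin.natAdd l k := by
      rw [Fin.le_def, Fin.val_rev, Fin.val_natAdd]; omega
    have := hν hle
    rw [hrev] at this
    change 0 ≤ ν (Fin.natAdd l k)
    linarith
  · have hsplit : ν = Fin.append ((-y) ∘ Fin.revPerm) y := by
      funext k
      induction k using Fin.addCases with
      | left k =>
        have : Fin.castAdd l k = (Fin.natAdd l k.rev).rev := by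
          ext; simp only [Fin.val_castAdd, Fin.val_rev, Fin.val_natAdd]; omega
        rw [Fin.append_left, this, hrev]
        rfl
      | right k => rw [Fin.append_right]; rfl
    rw [← hνx, hsplit, Fin.map_univ_val_append, Fin.map_univ_val_append, add_comm,
      Finset.map_univ_val_comp_perm]

section Spectra

variable {𝕜 : Type*} [RCLike 𝕜]

lemma roots_prod_X_sub_C_ofReal {ι : Type*} [Fintype ι] (v : ι → ℝ) :
    (∏ i, (X - C (v i : 𝕜))).roots = (Finset.univ.val.map v).map ((↑) : ℝ → 𝕜) := by
  rw [Polynomial.roots_prod _ _ (Finset.prod_ne_zero_iff.2 fun i _ => X_sub_C_ne_zero _)]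
  simp [Multiset.map_map]

lemma map_univ_val_eq_of_prod_X_sub_C_eq {ι κ : Type*} [Fintype ι] [Fintype κ] {v : ι → ℝ}
    {w : κ → ℝ} (h : ∏ i, (X - C (v i : 𝕜)) = ∏ k, (X - C (w k : 𝕜))) :
    Finset.univ.val.map v = Finset.univ.val.map w := by
  have := congrArg Polynomial.roots h
  rw [roots_prod_X_sub_C_ofReal, roots_prod_X_sub_C_ofReal] at this
  exact Multiset.map_injective RCLike.ofReal_injective this

lemma permMatrix_mem_unitaryGroup {n : Type*} [Fintype n] [DecidableEq n] (σ : Equiv.Perm n) :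
    σ.permMatrix 𝕜 ∈ Matrix.unitaryGroup n 𝕜 := by
  rw [Matrix.mem_unitaryGroup_iff, Matrix.star_eq_conjTranspose, Matrix.conjTranspose_permMatrix,
    ← Matrix.permMatrix_mul, inv_mul_cancel, Matrix.permMatrix_one]

end Spectra

namespace CUIN

variable {𝕜 : Type*} [RCLike 𝕜] (Φ : CUIN 𝕜)

lemma psi_comp_perm {n : ℕ} (x : Fin n → ℝ) (σ : Equiv.Perm (Fin n)) :
    Φ.psi (x ∘ σ) = Φ.psi x := by
  have h : Matrix.diagonal (fun i => ((x ∘ σ) i : 𝕜)) =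
      σ.permMatrix 𝕜 * Matrix.diagonal (fun i => (x i : 𝕜)) * σ⁻¹.permMatrix 𝕜 := by
    rw [Equiv.Perm.permMatrix, Equiv.Perm.permMatrix, PEquiv.toMatrix_toPEquiv_mul,
      PEquiv.mul_toMatrix_toPEquiv, Matrix.submatrix_submatrix]
    exact (Matrix.submatrix_diagonal_equiv (fun i => (x i : 𝕜)) σ).symm
  rw [psi, psi, h]
  exact Φ.invariant n _ ⟨_, permMatrix_mem_unitaryGroup σ⟩ ⟨_, permMatrix_mem_unitaryGroup σ⁻¹⟩

lemma psi_eq_of_map_univ_val_eq {n n' : ℕ} {v : Fin n → ℝ} {w : Fin n' → ℝ}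
    (h : Finset.univ.val.map v = Finset.univ.val.map w) : Φ.psi v = Φ.psi w := by
  obtain rfl : n = n' := by simpa using congrArg Multiset.card h
  obtain ⟨σ, rfl⟩ := exists_perm_of_map_univ_val_eq h
  exact Φ.psi_comp_perm w σ

lemma psi_append_zero {n : ℕ} (x : Fin n → ℝ) (t : ℕ) :
    Φ.psi (Fin.append x (0 : Fin t → ℝ)) = Φ.psi x := by
  rw [psi, psi, ← Φ.compatible n t]
  congr 1
  rw [padMat, ← (Matrix.diagonal_zero : Matrix.diagonal (0 : Fin t → 𝕜) = 0),
    Matrix.fromBlocks_diagonal, Matrix.reindex_apply, Matrix.submatrix_diagonal_equiv]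
  congr 1
  funext k
  induction k using Fin.addCases <;> simp

lemma psi_add_le {n : ℕ} (x y : Fin n → ℝ) : Φ.psi (x + y) ≤ Φ.psi x + Φ.psi y := by
  simpa [psi, ← Matrix.diagonal_add] using Φ.triangle n _ _

lemma psi_smul {n : ℕ} (r : ℝ) (x : Fin n → ℝ) : Φ.psi (r • x) = |r| * Φ.psi x := by
  have h : Matrix.diagonal (fun i => ((r • x) i : 𝕜)) =
      (r : 𝕜) • Matrix.diagonal (fun i => (x i : 𝕜)) := by
    rw [← Matrix.diagonal_smul]; congr 1; funext i; simp
  rw [psi, psi, h, Φ.smul_eq, RCLike.norm_ofReal]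

lemma convexOn_psi (n : ℕ) : ConvexOn ℝ Set.univ (Φ.psi (n := n)) := by
  refine ⟨convex_univ, fun x _ y _ a b ha hb _ => ?_⟩
  calc Φ.psi (a • x + b • y) ≤ Φ.psi (a • x) + Φ.psi (b • y) := Φ.psi_add_le _ _
    _ = a * Φ.psi x + b * Φ.psi y := by rw [psi_smul, psi_smul, abs_of_nonneg ha, abs_of_nonneg hb]

lemma psi_append_comm {m n : ℕ} (u : Fin m → ℝ) (v : Fin n → ℝ) :
    Φ.psi (Fin.append u v) = Φ.psi (Fin.append v u) :=
  Φ.psi_eq_of_map_univ_val_eq (by rw [Fin.map_univ_val_append, Fin.map_univ_val_append, add_comm])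

lemma psi_append_mean_le {l : ℕ} (u v : Fin l → ℝ) :
    Φ.psi (Fin.append (fun _ : Fin l => (∑ i, u i) / l) (fun _ : Fin l => (∑ i, v i) / l)) ≤
      Φ.psi (Fin.append u v) := by
  rcases Nat.eq_zero_or_pos l with rfl | hl
  · exact le_of_eq (congrArg Φ.psi (funext fun k => Fin.elim0 k))
  have : NeZero l := ⟨hl.ne'⟩
  -- the vector of means is the average of the rotations of both halves
  set rotation : Fin l → Fin (l + l) → ℝ :=
    fun t => Fin.append (u ∘ Equiv.addRight t) (v ∘ Equiv.addRight t)
  have hmean : Fin.append (fun _ : Fin l => (∑ i, u i) / l) (fun _ : Fin l => (∑ i, v i) / l) =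
      ∑ t, (l : ℝ)⁻¹ • rotation t := by
    have hsum (w : Fin l → ℝ) (k : Fin l) : ∑ t, w (Equiv.addRight t k) = ∑ i, w i :=
      Equiv.sum_comp (Equiv.addLeft k) w
    funext k
    induction k using Fin.addCases <;>
    · simp only [rotation, Finset.sum_apply, Pi.smul_apply, Fin.append_left, Fin.append_right,
        Function.comp_apply, smul_eq_mul, ← Finset.mul_sum, hsum, div_eq_inv_mul]
  have hrotation : ∀ t, Φ.psi (rotation t) = Φ.psi (Fin.append u v) := fun t =>
    Φ.psi_eq_of_map_univ_val_eq (by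
      rw [Fin.map_univ_val_append, Fin.map_univ_val_append, Finset.map_univ_val_comp_perm,
        Finset.map_univ_val_comp_perm])
  rw [hmean]
  calc Φ.psi (∑ t, (l : ℝ)⁻¹ • rotation t) ≤ ∑ t, (l : ℝ)⁻¹ • Φ.psi (rotation t) :=
        (Φ.convexOn_psi _).map_sum_le (fun _ _ => by positivity)
          (by simp [Finset.card_univ, hl.ne']) (fun _ _ => Set.mem_univ _)
    _ = Φ.psi (Fin.append u v) := by
        simp [hrotation, Finset.card_univ, hl.ne']

lemma psi_append_add_sub_le {l : ℕ} (a : ℝ) {c s : ℝ} (hc : 0 ≤ c) (hcs : c ≤ s) :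
    Φ.psi (Fin.append (fun _ : Fin l => a + c) (fun _ : Fin l => a - c)) ≤
      Φ.psi (Fin.append (fun _ : Fin l => a + s) (fun _ : Fin l => a - s)) := by
  obtain rfl | hs := (hc.trans hcs).eq_or_lt
  · rw [le_antisymm hcs hc]
  -- `(a + c, a - c)` is a convex combination of `(a + s, a - s)` and its mirror image
  set θ := (s + c) / (2 * s)
  have hθ : 0 ≤ θ := by positivity
  have hθ' : 0 ≤ 1 - θ := by rw [sub_nonneg, div_le_one (by positivity)]; linarith
  have hcomb : Fin.append (fun _ : Fin l => a + c) (fun _ : Fin l => a - c) =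
      θ • Fin.append (fun _ : Fin l => a + s) (fun _ : Fin l => a - s) +
        (1 - θ) • Fin.append (fun _ : Fin l => a - s) (fun _ : Fin l => a + s) := by
    funext k
    induction k using Fin.addCases <;>
    · simp only [Pi.add_apply, Pi.smul_apply, Fin.append_left, Fin.append_right, smul_eq_mul, θ]
      field_simp
      ring
  calc _ ≤ θ • Φ.psi (Fin.append (fun _ : Fin l => a + s) (fun _ : Fin l => a - s)) +
        (1 - θ) • Φ.psi (Fin.append (fun _ : Fin l => a - s) (fun _ : Fin l => a + s)) := by
        rw [hcomb]
        exact (Φ.convexOn_psi _).2 (Set.mem_univ _) (Set.mem_univ _) hθ hθ' (by ring)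
    _ = _ := by rw [Φ.psi_append_comm (fun _ => a - s)]; simp only [smul_eq_mul]; ring

lemma N_eq_psi_eigenvalues {n : ℕ} {A : Matrix (Fin n) (Fin n) 𝕜} (hA : A.IsHermitian) :
    Φ.N n A = Φ.psi hA.eigenvalues := by
  conv_lhs => rw [hA.spectral_theorem, Unitary.conjStarAlgAut_apply]
  exact Φ.invariant n _ hA.eigenvectorUnitary (star hA.eigenvectorUnitary)

lemma N_eq_psi_of_charpoly_eq {n n' : ℕ} {A : Matrix (Fin n) (Fin n) 𝕜} (hA : A.IsHermitian)
    {v : Fin n' → ℝ} (h : A.charpoly = ∏ i, (X - C (v i : 𝕜))) : Φ.N n A = Φ.psi v := by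
  rw [Φ.N_eq_psi_eigenvalues hA]
  exact Φ.psi_eq_of_map_univ_val_eq
    (map_univ_val_eq_of_prod_X_sub_C_eq (𝕜 := 𝕜) (by rw [← hA.charpoly_eq, h]))

/-- `W*W` and `WW*` have the same nonzero eigenvalues, so they agree once both are padded with
zeros to size `p + q`. -/
lemma N_conjTranspose_mul_self {p q : ℕ} (W : Matrix (Fin p) (Fin q) 𝕜) :
    Φ.N q (Wᴴ * W) = Φ.N p (W * Wᴴ) := by
  have h₁ := Matrix.isHermitian_conjTranspose_mul_self W
  have h₂ := Matrix.isHermitian_mul_conjTranspose_self W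
  rw [Φ.N_eq_psi_eigenvalues h₁, Φ.N_eq_psi_eigenvalues h₂, ← Φ.psi_append_zero h₁.eigenvalues p,
    ← Φ.psi_append_zero h₂.eigenvalues q]
  refine Φ.psi_eq_of_map_univ_val_eq (map_univ_val_eq_of_prod_X_sub_C_eq (𝕜 := 𝕜) ?_)
  simp only [Fin.prod_univ_add, Fin.append_left, Fin.append_right, Pi.zero_apply,
    map_zero, sub_zero, Finset.prod_const, Finset.card_univ, Fintype.card_fin]
  rw [← h₁.charpoly_eq, ← h₂.charpoly_eq]
  have := Matrix.charpoly_mul_comm' Wᴴ W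
  simp only [Fintype.card_fin] at this
  linear_combination this

end CUIN

section HermitianDilation

variable {𝕜 : Type*} [RCLike 𝕜]

def hermDilation {p q : ℕ} (M : Matrix (Fin p) (Fin q) 𝕜) : Matrix (Fin (p + q)) (Fin (p + q)) 𝕜 :=
  Matrix.reindex finSumFinEquiv finSumFinEquiv (Matrix.fromBlocks 0 M Mᴴ 0)

variable {p q : ℕ} (M : Matrix (Fin p) (Fin q) 𝕜)

lemma isHermitian_hermDilation : (hermDilation M).IsHermitian :=
  (Matrix.IsHermitian.fromBlocks Matrix.isHermitian_zero rfl Matrix.isHermitian_zero).submatrix _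

lemma charpoly_neg_hermDilation : (-hermDilation M).charpoly = (hermDilation M).charpoly := by
  set J : Matrix (Fin p ⊕ Fin q) (Fin p ⊕ Fin q) 𝕜 := Matrix.fromBlocks 1 0 0 (-1)
  have hJJ : J * J = 1 := by simp [J, Matrix.fromBlocks_multiply, Matrix.fromBlocks_one]
  have hneg : -Matrix.fromBlocks 0 M Mᴴ 0 = J * (Matrix.fromBlocks 0 M Mᴴ 0 * J) := by
    simp [J, Matrix.fromBlocks_multiply, Matrix.fromBlocks_neg]
  have hreindex : -hermDilation M =
      Matrix.reindex finSumFinEquiv finSumFinEquiv (-Matrix.fromBlocks 0 M Mᴴ 0) := rfl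
  rw [hreindex, hermDilation, Matrix.charpoly_reindex, Matrix.charpoly_reindex, hneg,
    Matrix.charpoly_mul_comm, Matrix.mul_assoc, hJJ, Matrix.mul_one]

lemma map_univ_val_neg_eigenvalues_hermDilation :
    Finset.univ.val.map (-(isHermitian_hermDilation M).eigenvalues) =
      Finset.univ.val.map (isHermitian_hermDilation M).eigenvalues := by
  have hH := isHermitian_hermDilation M
  refine map_univ_val_eq_of_prod_X_sub_C_eq (𝕜 := 𝕜) ?_
  rw [← hH.charpoly_eq, ← charpoly_neg_hermDilation, ← cfc_neg_id (R := ℝ) (hermDilation M),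
    hH.charpoly_cfc_eq]
  rfl

lemma sum_abs_eigenvalues_hermDilation :
    ∑ k, |(isHermitian_hermDilation M).eigenvalues k| = traceAbs Mᴴ + traceAbs M := by
  have hH := isHermitian_hermDilation M
  have h₁ := (Matrix.posSemidef_conjTranspose_mul_self Mᴴ).1
  have h₂ := (Matrix.posSemidef_conjTranspose_mul_self M).1
  have hsq : Finset.univ.val.map (fun k => hH.eigenvalues k ^ 2) =
      Finset.univ.val.map (Fin.append h₁.eigenvalues h₂.eigenvalues) := by
    refine map_univ_val_eq_of_prod_X_sub_C_eq (𝕜 := 𝕜) ?_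
    have hH2 : hermDilation M ^ 2 = Matrix.reindex finSumFinEquiv finSumFinEquiv
        (Matrix.fromBlocks (Mᴴᴴ * Mᴴ) 0 0 (Mᴴ * M)) := by
      simp [hermDilation, sq, Matrix.fromBlocks_multiply]
    rw [← hH.charpoly_cfc_eq (· ^ 2), cfc_pow_id (R := ℝ) (hermDilation M) 2, hH2,
      Matrix.charpoly_reindex, Matrix.charpoly_fromBlocks_zero₁₂, h₁.charpoly_eq, h₂.charpoly_eq,
      Fin.prod_univ_add]
    simp only [Fin.append_left, Fin.append_right]
  calc ∑ k, |hH.eigenvalues k| = ∑ k, Real.sqrt (hH.eigenvalues k ^ 2) := by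
        simp only [Real.sqrt_sq_eq_abs]
    _ = ∑ k, Real.sqrt (Fin.append h₁.eigenvalues h₂.eigenvalues k) :=
        Finset.sum_comp_eq_of_map_univ_val_eq hsq Real.sqrt
    _ = traceAbs Mᴴ + traceAbs M := by simp [Fin.sum_univ_add, traceAbs]

end HermitianDilation

section HermitianDilationSquare

variable {𝕜 : Type*} [RCLike 𝕜] {l : ℕ} (M : Matrix (Fin l) (Fin l) 𝕜)

lemma traceAbs_conjTranspose : traceAbs Mᴴ = traceAbs M := by
  have h := (Matrix.posSemidef_conjTranspose_mul_self Mᴴ).1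
  unfold traceAbs
  rw [(h.eigenvalues_eq_eigenvalues_iff (Matrix.posSemidef_conjTranspose_mul_self M).1).2
    (by rw [Matrix.conjTranspose_conjTranspose, Matrix.charpoly_mul_comm])]

/-- The spectrum of the dilation of a square matrix is `±` its singular values. -/
lemma exists_map_univ_val_eigenvalues_hermDilation_eq :
    ∃ y : Fin l → ℝ, Finset.univ.val.map (isHermitian_hermDilation M).eigenvalues =
      Finset.univ.val.map (Fin.append y (-y)) ∧ ∑ i, y i = traceAbs M := by
  obtain ⟨y, hy, hmap⟩ := exists_nonneg_map_univ_val_eq_append_neg _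
    (map_univ_val_neg_eigenvalues_hermDilation M)
  refine ⟨y, hmap, ?_⟩
  have habs := Finset.sum_comp_eq_of_map_univ_val_eq hmap abs
  rw [sum_abs_eigenvalues_hermDilation, traceAbs_conjTranspose, Fin.sum_univ_add] at habs
  simp only [Fin.append_left, Fin.append_right, Pi.neg_apply, abs_neg, abs_of_nonneg (hy _)] at habs
  linarith

end HermitianDilationSquare

namespace CUIN

variable {𝕜 : Type*} [RCLike 𝕜] (Φ : CUIN 𝕜)

lemma psi_append_add_sub_le_N_algebraMap_add_hermDilation {l : ℕ} (hl : 0 < l)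
    (M : Matrix (Fin l) (Fin l) 𝕜) (a : ℝ) {c : ℝ} (hc : 0 ≤ c) (hcM : l * c ≤ traceAbs M) :
    Φ.psi (Fin.append (fun _ : Fin l => a + c) (fun _ : Fin l => a - c)) ≤
      Φ.N (l + l) (algebraMap ℝ _ a + hermDilation M) := by
  have hH := isHermitian_hermDilation M
  obtain ⟨y, hmap, hsum⟩ := exists_map_univ_val_eigenvalues_hermDilation_eq M
  have hN : Φ.N (l + l) (algebraMap ℝ _ a + hermDilation M) =
      Φ.psi (Fin.append (fun k => a + y k) (fun k => a - y k)) := by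
    have hcfc : cfc (fun x => a + x) (hermDilation M) = algebraMap ℝ _ a + hermDilation M := by
      rw [cfc_const_add a (fun x : ℝ => x) (hermDilation M),
        cfc_id' ℝ (hermDilation M) hH.isSelfAdjoint]
    rw [← hcfc, Φ.N_eq_psi_of_charpoly_eq
      (cfc_predicate (fun x => a + x) (hermDilation M)).isHermitian (hH.charpoly_cfc_eq _)]
    refine Φ.psi_eq_of_map_univ_val_eq ?_
    change Multiset.map ((a + ·) ∘ hH.eigenvalues) _ = _
    rw [← Multiset.map_map, hmap, Multiset.map_map]
    congr 1
    funext k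
    induction k using Fin.addCases <;>
      simp only [Function.comp_apply, Fin.append_left, Fin.append_right, Pi.neg_apply,
        sub_eq_add_neg]
  have hmean_add : (∑ i, (a + y i)) / l = a + traceAbs M / l := by
    rw [Finset.sum_add_distrib, hsum]; field_simp; simp
  have hmean_sub : (∑ i, (a - y i)) / l = a - traceAbs M / l := by
    rw [Finset.sum_sub_distrib, hsum]; field_simp; simp
  calc Φ.psi (Fin.append (fun _ : Fin l => a + c) (fun _ : Fin l => a - c))
      ≤ Φ.psi (Fin.append (fun _ : Fin l => a + traceAbs M / l)
          (fun _ : Fin l => a - traceAbs M / l)) :=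
        Φ.psi_append_add_sub_le a hc (by rwa [le_div_iff₀ (by exact_mod_cast hl), mul_comm])
    _ ≤ Φ.psi (Fin.append (fun k => a + y k) (fun k => a - y k)) := by
        simpa only [hmean_add, hmean_sub] using
          Φ.psi_append_mean_le (fun k => a + y k) (fun k => a - y k)
    _ = _ := hN.symm

end CUIN

section Gram

variable {𝕜 : Type*} [RCLike 𝕜] {p d : ℕ} (A B : Matrix (Fin p) (Fin d) 𝕜)

def stackRows : Matrix (Fin (p + p)) (Fin d) 𝕜 :=
  Matrix.reindex finSumFinEquiv (Equiv.refl _) (Matrix.fromRows A B)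

lemma conjTranspose_stackRows_mul_self : (stackRows A B)ᴴ * stackRows A B = Aᴴ * A + Bᴴ * B := by
  rw [stackRows, Matrix.reindex_apply, Matrix.conjTranspose_submatrix, Matrix.submatrix_mul_equiv,
    Matrix.conjTranspose_fromRows_eq_fromCols_conjTranspose, Matrix.fromCols_mul_fromRows]
  rfl

lemma stackRows_mul_conjTranspose_self {r : ℝ} (hA : A * Aᴴ = (r : 𝕜) • 1)
    (hB : B * Bᴴ = (r : 𝕜) • 1) :
    stackRows A B * (stackRows A B)ᴴ = algebraMap ℝ _ r + hermDilation (A * Bᴴ) := by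
  rw [stackRows, Matrix.reindex_apply, Matrix.conjTranspose_submatrix, Matrix.submatrix_mul_equiv,
    Matrix.conjTranspose_fromRows_eq_fromCols_conjTranspose, Matrix.fromRows_mul_fromCols, hA, hB]
  ext k k'
  induction k using Fin.addCases <;> induction k' using Fin.addCases <;>
    simp [hermDilation, Matrix.one_apply, Algebra.algebraMap_eq_smul_one,
      Fin.ext_iff, -Fin.natAdd_eq_addNat]
    <;> omega

end Gram

lemma le_errP_two {𝕜 : Type*} [RCLike 𝕜] (Φ : CUIN 𝕜) {m l d : ℕ}
    (V : Fin m → Matrix (Fin l) (Fin d) 𝕜) {i j : Fin m} (hij : i ≠ j) :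
    Φ.N d ((V i)ᴴ * V i + (V j)ᴴ * V j) ≤ errP Φ 2 V := by
  refine le_csSup ((Set.finite_range fun K : Finset (Fin m) =>
    Φ.N d (∑ k ∈ K, (V k)ᴴ * V k)).subset ?_).bddAbove ⟨{i, j}, Finset.card_pair hij, ?_⟩
  · rintro _ ⟨K, -, rfl⟩
    exact ⟨K, rfl⟩
  · rw [Finset.sum_pair hij]

theorem stmt8_general {𝕜 : Type*} [RCLike 𝕜] (m l d : ℕ) (hl : 0 < l)
    (Φ : CUIN 𝕜) (V : Fin m → Matrix (Fin l) (Fin d) 𝕜)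
    (huwp : IsUWP V)
    (hC : ∃ i j : Fin m, i ≠ j ∧ (l : ℝ) * cmld m l d ≤ traceAbs (V i * (V j)ᴴ)) :
    Φ.psi (Fin.append (fun _ : Fin l => (d : ℝ) / ((m : ℝ) * l) + cmld m l d)
        (fun _ : Fin l => (d : ℝ) / ((m : ℝ) * l) - cmld m l d)) ≤ errP Φ 2 V := by
  obtain ⟨i, j, hij, hC⟩ := hC
  have hVV (k : Fin m) : V k * (V k)ᴴ = (((d : ℝ) / ((m : ℝ) * l) : ℝ) : 𝕜) • 1 := by
    rw [huwp.2 k]; push_cast; rfl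
  calc _ ≤ Φ.N (l + l) (algebraMap ℝ _ ((d : ℝ) / ((m : ℝ) * l)) + hermDilation (V i * (V j)ᴴ)) :=
        Φ.psi_append_add_sub_le_N_algebraMap_add_hermDilation hl _ _ (Real.sqrt_nonneg _) hC
    _ = Φ.N d ((V i)ᴴ * V i + (V j)ᴴ * V j) := by
        rw [← stackRows_mul_conjTranspose_self _ _ (hVV i) (hVV j), ← Φ.N_conjTranspose_mul_self,
          conjTranspose_stackRows_mul_self]
    _ ≤ errP Φ 2 V := le_errP_two Φ V hij

theorem stmt8 {𝕜 : Type*} [RCLike 𝕜] (m l d : ℕ) (hm : 2 ≤ m) (hl : 0 < l) (hld : l < d)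
    (hdm : d < m * l)
    (Φ : CUIN 𝕜) (V : Fin m → Matrix (Fin l) (Fin d) 𝕜)
    (huwp : IsUWP V)
    (hC : ∃ i j : Fin m, i ≠ j ∧ (l : ℝ) * cmld m l d ≤ traceAbs (V i * (V j)ᴴ)) :
    Φ.psi (Fin.append (fun _ : Fin l => (d : ℝ) / ((m : ℝ) * l) + cmld m l d)
        (fun _ : Fin l => (d : ℝ) / ((m : ℝ) * l) - cmld m l d)) ≤ errP Φ 2 V :=
  stmt8_general m l d hl Φ V huwp hC
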